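/- Let n ≥ 2, β > 0, γ > 0 and α a real number with α − (n−1)β > 0. Then the function F(λ₁,…,λₙ) = ∏_{i=1}^n λ_i^{(α−(n−1)β)/2 − 1} e^{−γ λ_i} · ∏_{1≤i<j≤n} (λ_j − λ_i)^β is integrable over the closed chamber {λ ∈ ℝⁿ : 0 ≤ λ₁ ≤ … ≤ λₙ} with respect to Lebesgue measure. -/

import Mathlib

/-!
On the chamber `0 ≤ λ₁ ≤ … ≤ λₙ` each Vandermonde factor satisfies `λⱼ - λᵢ ≤ λⱼ`, so the
Vandermonde product is at most `∏ⱼ λⱼ ^ (β (j - 1))`. Hence `F` is dominated by the product of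
the one-variable functions `x ^ (s + β (j - 1)) e^{-γ x}` on `(0, ∞)`, with
`s = (α - (n - 1) β) / 2 - 1 > -1`; each is integrable (a Gamma integrand), and so is their
product on `ℝⁿ`.
-/

open MeasureTheory Finset Real

lemma measurableSet_setOf_monotone {ι α : Type*} [Preorder ι] [Countable ι]
    [TopologicalSpace α] [PartialOrder α] [OrderClosedTopology α] [SecondCountableTopology α]
    [MeasurableSpace α] [OpensMeasurableSpace α] :
    MeasurableSet {l : ι → α | Monotone l} := by
  simp only [Monotone, Set.ofPred_forall]
  exact .iInter fun i => .iInter fun j => .iInter fun _ =>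
    measurableSet_le (measurable_pi_apply i) (measurable_pi_apply j)

lemma ae_forall_apply_ne_zero {ι : Type*} [Fintype ι] :
    ∀ᵐ l : ι → ℝ, ∀ i, l i ≠ 0 :=
  ae_all_iff.2 fun i => Measure.ae_eval_ne (fun _ => volume) i 0

lemma integrable_prod_indicator_rpow_mul_exp_neg_mul {ι : Type*} [Fintype ι] {s : ι → ℝ}
    (hs : ∀ i, -1 < s i) {γ : ℝ} (hγ : 0 < γ) :
    Integrable fun l : ι → ℝ =>
      ∏ i, (Set.Ioi 0).indicator (fun x => x ^ s i * exp (-γ * x)) (l i) :=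
  Integrable.fintype_prod fun i => (integrable_indicator_iff measurableSet_Ioi).2 <| by
    simpa only [rpow_one] using integrableOn_rpow_mul_exp_neg_mul_rpow (hs i) one_pos hγ

lemma prod_filter_fst_lt_snd {M : Type*} [CommMonoid M] {n : ℕ} (f : Fin n → M) :
    ∏ p ∈ univ.filter (fun p : Fin n × Fin n => p.1 < p.2), f p.2 = ∏ j, f j ^ (j : ℕ) := by
  rw [prod_finset_product_right _ univ (fun j => Iio j) (by simp)]
  simp [Fin.card_Iio]

lemma prod_sub_rpow_le_prod_rpow_mul {n : ℕ} {β : ℝ} (hβ : 0 ≤ β) {l : Fin n → ℝ}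
    (hl : Monotone l) (hnonneg : ∀ i, 0 ≤ l i) :
    ∏ p ∈ univ.filter (fun p : Fin n × Fin n => p.1 < p.2), (l p.2 - l p.1) ^ β ≤
      ∏ j, l j ^ (β * j) := by
  have hsub : ∀ p ∈ univ.filter (fun p : Fin n × Fin n => p.1 < p.2), 0 ≤ l p.2 - l p.1 :=
    fun p hp => sub_nonneg.2 (hl (mem_filter.1 hp).2.le)
  calc _ ≤ ∏ p ∈ univ.filter (fun p : Fin n × Fin n => p.1 < p.2), l p.2 ^ β :=
        prod_le_prod (fun p hp => rpow_nonneg (hsub p hp) _) fun p hp =>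
          rpow_le_rpow (hsub p hp) (sub_le_self _ (hnonneg p.1)) hβ
    _ = ∏ j, (l j ^ β) ^ (j : ℕ) := prod_filter_fst_lt_snd fun j => l j ^ β
    _ = _ := prod_congr rfl fun j _ => by rw [← rpow_natCast, ← rpow_mul (hnonneg j)]

lemma norm_density_le {n : ℕ} {c β γ : ℝ} (hβ : 0 ≤ β) {l : Fin n → ℝ}
    (hl : Monotone l) (hpos : ∀ i, 0 < l i) :
    ‖(∏ i, l i ^ c * exp (-γ * l i)) *
        ∏ p ∈ univ.filter (fun p : Fin n × Fin n => p.1 < p.2), (l p.2 - l p.1) ^ β‖ ≤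
      ∏ i, l i ^ (c + β * i) * exp (-γ * l i) := by
  have hweight : 0 ≤ ∏ i, l i ^ c * exp (-γ * l i) :=
    prod_nonneg fun i _ => mul_nonneg (rpow_nonneg (hpos i).le _) (exp_pos _).le
  have hvdm : 0 ≤ ∏ p ∈ univ.filter (fun p : Fin n × Fin n => p.1 < p.2),
      (l p.2 - l p.1) ^ β :=
    prod_nonneg fun p hp => rpow_nonneg (sub_nonneg.2 (hl (mem_filter.1 hp).2.le)) _
  calc _ = (∏ i, l i ^ c * exp (-γ * l i)) *
        ∏ p ∈ univ.filter (fun p : Fin n × Fin n => p.1 < p.2), (l p.2 - l p.1) ^ β :=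
        norm_of_nonneg (mul_nonneg hweight hvdm)
    _ ≤ (∏ i, l i ^ c * exp (-γ * l i)) * ∏ j, l j ^ (β * j) :=
        mul_le_mul_of_nonneg_left
          (prod_sub_rpow_le_prod_rpow_mul hβ hl fun i => (hpos i).le) hweight
    _ = _ := by
        rw [← prod_mul_distrib]
        refine prod_congr rfl fun i _ => ?_
        rw [rpow_add (hpos i)]
        ring

/-- The (unnormalized) density of the stationary probability measure of the
eigenvalue SDE (Proposition 2.6 of the paper) is integrable on the closed
chamber. -/
theorem stmt_7 (n : ℕ) (hn : 2 ≤ n) (α β γ : ℝ) (hβ : 0 < β) (hγ : 0 < γ)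
    (hαβ : 0 < α - ((n : ℝ) - 1) * β)
    (F : (Fin n → ℝ) → ℝ)
    (hF : ∀ l : Fin n → ℝ, F l =
      (∏ i : Fin n,
          (l i) ^ ((α - ((n : ℝ) - 1) * β) / 2 - 1) * Real.exp (-γ * l i)) *
        ∏ p ∈ Finset.univ.filter (fun p : Fin n × Fin n => p.1 < p.2),
          (l p.2 - l p.1) ^ β) :
    IntegrableOn F {l : Fin n → ℝ | 0 ≤ l ⟨0, by omega⟩ ∧ Monotone l} volume := by
  have hexp : ∀ i : Fin n, -1 < (α - ((n : ℝ) - 1) * β) / 2 - 1 + β * i := fun i => by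
    have : 0 ≤ β * i := by positivity
    linarith
  have hchamber : MeasurableSet {l : Fin n → ℝ | 0 ≤ l ⟨0, by omega⟩ ∧ Monotone l} :=
    (measurableSet_le measurable_const (measurable_pi_apply _)).inter
      measurableSet_setOf_monotone
  have hFmeas : Measurable F := by
    rw [funext hF]
    fun_prop
  refine (integrable_prod_indicator_rpow_mul_exp_neg_mul hexp hγ).integrableOn.mono'
    hFmeas.aestronglyMeasurable ?_
  -- Coordinates vanish only on a null set; away from it `rpow` obeys `x ^ (a + b) = x ^ a * x ^ b`.
  filter_upwards [ae_restrict_mem hchamber, ae_restrict_of_ae ae_forall_apply_ne_zero]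
    with l ⟨h0, hl⟩ hne
  have hpos : ∀ i, 0 < l i := fun i =>
    (h0.trans (hl (Fin.le_iff_val_le_val.2 (Nat.zero_le _)))).lt_of_ne' (hne i)
  simp only [hF, Set.indicator_of_mem (Set.mem_Ioi.2 (hpos _))]
  exact norm_density_le hβ.le hl hpos
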